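/- Fix reals 0 < f1 < f2, λ with 0 < λ ≤ 1, and censoring hashrates c_t with 0 ≤ c_t and λ + c_t ≤ 1 for each t. Define V : ℕ → ℝ backwards from T by V T = λ * f2 and V t = max (λ * f1 + c_t * V (t+1)) ((λ + c_t) * V (t+1)) for t < T. Then the set of rounds at which including is strictly optimal is downward closed: for every t with 1 ≤ t < T, if λ * f1 + c_t * V (t+1) > (λ + c_t) * V (t+1), then λ * f1 + c_{t-1} * V t > (λ + c_{t-1}) * V t. Consequently the optimal policy has threshold form: there exists t* ≤ T such that including is optimal exactly at rounds t < t* and censoring is optimal at rounds t ≥ t*. -/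
import Mathlib


/-- The set of rounds at which including is strictly optimal is downward closed,
and consequently the optimal policy has threshold form: there is `t* ≤ T` such
that including is optimal exactly at rounds `t < t*` and censoring at `t ≥ t*`. -/
theorem include_downward_closed_threshold
    (f1 f2 lam : ℝ) (c : ℕ → ℝ) (T : ℕ) (V : ℕ → ℝ)
    (hf1 : 0 < f1) (hf12 : f1 < f2)
    (hlam : 0 < lam) (hlam1 : lam ≤ 1)
    (hc : ∀ t, 0 ≤ c t) (hc1 : ∀ t, lam + c t ≤ 1)
    (hVT : V T = lam * f2)
    (hV : ∀ t, t < T →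
      V t = max (lam * f1 + c t * V (t + 1)) ((lam + c t) * V (t + 1))) :
    (∀ t, 1 ≤ t → t < T →
        lam * f1 + c t * V (t + 1) > (lam + c t) * V (t + 1) →
        lam * f1 + c (t - 1) * V t > (lam + c (t - 1)) * V t) ∧
    (∃ tstar, tstar ≤ T ∧ ∀ t, t < T →
        (t < tstar → lam * f1 + c t * V (t + 1) ≥ (lam + c t) * V (t + 1)) ∧
        (tstar ≤ t → (lam + c t) * V (t + 1) ≥ lam * f1 + c t * V (t + 1))) := by
  -- lower bound on the value function
  have hlow : ∀ k t, t + k = T → lam * f1 ≤ V t := by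
    intro k
    induction k with
    | zero =>
      intro t ht
      simp only [Nat.add_zero] at ht
      subst ht
      rw [hVT]
      nlinarith
    | succ n ih =>
      intro t ht
      have htT : t < T := by omega
      have h1 : V (t + 1) ≥ lam * f1 := ih (t + 1) (by omega)
      rw [hV t htT]
      have hcv : 0 ≤ c t * V (t + 1) :=
        mul_nonneg (hc t) (le_trans (by positivity) h1)
      have : lam * f1 + c t * V (t + 1) ≥ lam * f1 := by linarith
      exact le_trans this (le_max_left _ _)
  have hlow' : ∀ t, t ≤ T → lam * f1 ≤ V t := fun t ht => hlow (T - t) t (by omega)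
  -- the downward step
  have step : ∀ t, 1 ≤ t → t < T →
      lam * f1 + c t * V (t + 1) > (lam + c t) * V (t + 1) →
      lam * f1 + c (t - 1) * V t > (lam + c (t - 1)) * V t := by
    intro t ht1 htT hstrict
    have hP : f1 > V (t + 1) := by
      have : lam * f1 > lam * V (t + 1) := by nlinarith
      exact lt_of_mul_lt_mul_left (by linarith) hlam.le
    have hVt1 : lam * f1 ≤ V (t + 1) := hlow' (t + 1) (by omega)
    have hVtpos : 0 < V (t + 1) := lt_of_lt_of_le (by nlinarith) hVt1
    have hVt : V t = lam * f1 + c t * V (t + 1) := by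
      rw [hV t htT]; exact max_eq_left hstrict.le
    -- show f1 > V t
    have hkey : f1 > V t := by
      rw [hVt]
      rcases lt_or_eq_of_le hlam1 with h | h
      · have h1 : c t * V (t + 1) ≤ (1 - lam) * V (t + 1) := by
          apply mul_le_mul_of_nonneg_right _ hVtpos.le
          linarith [hc1 t]
        have h2 : (1 - lam) * V (t + 1) < (1 - lam) * f1 := by
          apply mul_lt_mul_of_pos_left hP (by linarith)
        nlinarith
      · exfalso
        rw [h, one_mul] at hVt1
        linarith
    nlinarith [hc (t - 1), hkey, hlam]
  refine ⟨step, ?_⟩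
  -- strictness is downward closed: chain lemma
  have chain : ∀ t, t < T →
      lam * f1 + c t * V (t + 1) > (lam + c t) * V (t + 1) →
      ∀ s, s ≤ t → lam * f1 + c s * V (s + 1) > (lam + c s) * V (s + 1) := by
    intro t
    induction t with
    | zero =>
      intro _ h s hs
      interval_cases s
      exact h
    | succ n ih =>
      intro hnT h s hs
      rcases Nat.lt_or_ge s (n + 1) with hlt | hge
      · have hn : lam * f1 + c n * V (n + 1) > (lam + c n) * V (n + 1) := by
          have := step (n + 1) (by omega) hnT h
          simpa using this
        exact ih (by omega) hn s (by omega)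
      · have : s = n + 1 := by omega
        subst this
        exact h
  -- define tstar
  classical
  set C : Set ℕ := {t | ¬ (t < T ∧ lam * f1 + c t * V (t + 1) > (lam + c t) * V (t + 1))}
    with hC
  have hTC : T ∈ C := by simp [hC]
  have hne : C.Nonempty := ⟨T, hTC⟩
  refine ⟨sInf C, Nat.sInf_le hTC, ?_⟩
  intro t htT
  constructor
  · intro htlt
    have : t ∉ C := Nat.notMem_of_lt_sInf htlt
    simp only [hC, Set.mem_setOf_eq, not_not] at this
    exact le_of_lt (this.2)
  · intro hle
    by_contra hcon
    rw [ge_iff_le, not_le] at hcon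
    have hmem : sInf C ∈ C := Nat.sInf_mem hne
    have hstrict : lam * f1 + c (sInf C) * V (sInf C + 1) > (lam + c (sInf C)) * V (sInf C + 1) :=
      chain t htT hcon (sInf C) hle
    simp only [hC, Set.mem_setOf_eq] at hmem
    exact hmem ⟨lt_of_le_of_lt hle htT, hstrict⟩
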